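/- arXiv:2208.13576 — 5 statements merged into one kernel-verified Lean document; each statement's English description precedes it below -/
import Mathlib

section
/- Let X be a real Banach space whose dual X* is separable, let 𝕂 ∈ {ℝ, ℂ} and let H be a Hilbert space over 𝕂. Suppose the bilinear map (b, f) ↦ T_b f from X** × H to H satisfies condition (A1) with constants 0 < c ≤ C. Define T̃_b(f, g) := (T_b* g, T_b f) on the Hilbert space direct sum H × H. Then (b, (f, g)) ↦ T̃_b(f, g) is a bilinear map from X** × (H × H) to H × H satisfying condition (A1) with the same constants c, C, and satisfying condition (A2). Moreover, if T itself also satisfies condition (A2), then for all b ∈ X** and f, g ∈ H one has ⟨T̃_b(f, g), (f, g)⟩_{H×H} = 2·Re⟨T_b f, g⟩_H, which for b ∈ X equals ⟨b, Q'_f g⟩, where Q'_f g ∈ X* is the Gâteaux derivative of the quadratic map Q (given by ⟨b, Qω⟩ = ⟨T_b ω, ω⟩_H) at f in direction g. -/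
/-!
`T̃_b` is the Hermitian dilation `[[0, T_b†], [T_b, 0]]` of `T_b`. It acts as `T_b` and `T_b†` between
orthogonal summands, so `‖T̃_b‖ = ‖T_b‖` and the bounds of (A1) transfer verbatim; compactness
transfers because the adjoint of a compact operator is compact, which in a Hilbert space follows
from `‖A† v‖² ≤ ‖A A† v‖ ‖v‖`. The quadratic form of `T̃_b` at `(f, g)` is `2 Re ⟪T_b f, g⟫`, which
is odd in `g`; evaluating it at `(f, g) / √2` shows that its supremum over the unit sphere is the
supremum of `Re ⟪T_b f, g⟫` over unit `f, g`, that is `‖T_b‖`.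
-/

theorem TotallyBounded.image_of_dist_lt {α β γ : Type*} [PseudoMetricSpace β]
    [PseudoMetricSpace γ] {s : Set α} {f : α → β} {g : α → γ} (hg : TotallyBounded (g '' s))
    (hfg : ∀ ε > 0, ∃ δ > 0, ∀ x ∈ s, ∀ y ∈ s, dist (g x) (g y) < δ → dist (f x) (f y) < ε) :
    TotallyBounded (f '' s) := by
  refine Metric.totallyBounded_iff.2 fun ε hε => ?_
  obtain ⟨δ, hδ, hfg⟩ := hfg ε hε
  obtain ⟨u, hus, hufin, hcover⟩ := Metric.finite_approx_of_totallyBounded hg δ hδ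
  obtain ⟨t, hts, htfin, rfl⟩ := hufin.exists_subset_finite_image_eq hus
  refine ⟨f '' t, htfin.image f, ?_⟩
  rintro _ ⟨x, hx, rfl⟩
  obtain ⟨_, ⟨y, hy, rfl⟩, hxy⟩ := Set.mem_iUnion₂.1 (hcover ⟨x, hx, rfl⟩)
  exact Set.mem_biUnion (Set.mem_image_of_mem f hy) (hfg x hx y (hts hy) hxy)

theorem IsCompactOperator.prodMap {M₁ M₂ M₃ M₄ : Type*} [Zero M₁] [TopologicalSpace M₁]
    [TopologicalSpace M₂] [Zero M₃] [TopologicalSpace M₃] [TopologicalSpace M₄]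
    {f : M₁ → M₂} {g : M₃ → M₄} (hf : IsCompactOperator f) (hg : IsCompactOperator g) :
    IsCompactOperator (Prod.map f g) := by
  obtain ⟨K, hK, hfK⟩ := hf
  obtain ⟨L, hL, hgL⟩ := hg
  exact ⟨K ×ˢ L, hK.prod hL, by
    rw [Set.preimage_prod_map_prod]; exact prod_mem_nhds hfK hgL⟩

theorem ContinuousLinearMap.re_inner_apply_self_le_norm {𝕜 E : Type*} [RCLike 𝕜]
    [NormedAddCommGroup E] [InnerProductSpace 𝕜 E] (T : E →L[𝕜] E) {u : E} (hu : ‖u‖ = 1) :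
    RCLike.re (inner 𝕜 (T u) u) ≤ ‖T‖ :=
  calc RCLike.re (inner 𝕜 (T u) u) ≤ ‖T u‖ * ‖u‖ := re_inner_le_norm _ _
    _ ≤ ‖T‖ * ‖u‖ * ‖u‖ := by gcongr; exact T.le_opNorm u
    _ = ‖T‖ := by rw [hu, mul_one, mul_one]

section Adjoint

open scoped InnerProduct InnerProductSpace

variable {𝕜 E F : Type*} [RCLike 𝕜] [NormedAddCommGroup E] [InnerProductSpace 𝕜 E]
  [CompleteSpace E] [NormedAddCommGroup F] [InnerProductSpace 𝕜 F] [CompleteSpace F]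

theorem ContinuousLinearMap.norm_adjoint_apply_sq_le (A : E →L[𝕜] F) (v : F) :
    ‖(A†) v‖ ^ 2 ≤ ‖A ((A†) v)‖ * ‖v‖ := by
  rw [← A.adjoint_adjoint, apply_norm_sq_eq_inner_adjoint_left, adjoint_adjoint, adjoint_adjoint]
  exact re_inner_le_norm _ _

theorem IsCompactOperator.adjoint {A : E →L[𝕜] F} (hA : IsCompactOperator A) :
    IsCompactOperator (A†) := by
  rw [isCompactOperator_iff_exists_mem_nhds_isCompact_closure_image]
  refine ⟨Metric.ball 0 1, Metric.ball_mem_nhds _ one_pos,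
    (TotallyBounded.closure ?_).isCompact_of_isClosed isClosed_closure⟩
  have hAA : IsCompactOperator (A ∘L (A†)) := hA.comp_clm _
  refine (hAA.isCompact_closure_image_ball 1).totallyBounded.subset subset_closure
    |>.image_of_dist_lt fun ε hε => ⟨ε ^ 2 / 2, by positivity, fun x hx y hy hxy => ?_⟩
  rw [mem_ball_zero_iff] at hx hy
  rw [dist_eq_norm, ← map_sub] at hxy ⊢
  have hxy' : ‖x - y‖ < 2 := (norm_sub_le x y).trans_lt (by linarith)
  have hsq : ‖(A†) (x - y)‖ ^ 2 < ε ^ 2 := calc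
    _ ≤ ‖A ((A†) (x - y))‖ * ‖x - y‖ := A.norm_adjoint_apply_sq_le (x - y)
    _ < ε ^ 2 / 2 * 2 := mul_lt_mul'' hxy hxy' (norm_nonneg _) (norm_nonneg _)
    _ = ε ^ 2 := by ring
  exact lt_of_pow_lt_pow_left₀ 2 hε.le hsq

noncomputable def ContinuousLinearMap.hermitianDilation (A : E →L[𝕜] F) :
    WithLp 2 (E × F) →L[𝕜] WithLp 2 (E × F) :=
  ((WithLp.prodContinuousLinearEquiv 2 𝕜 E F).symm : E × F →L[𝕜] WithLp 2 (E × F)) ∘L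
    ((A†).prodMap A) ∘L (ContinuousLinearEquiv.prodComm 𝕜 E F : E × F →L[𝕜] F × E) ∘L
    (WithLp.prodContinuousLinearEquiv 2 𝕜 E F : WithLp 2 (E × F) →L[𝕜] E × F)

namespace ContinuousLinearMap

variable (A : E →L[𝕜] F)

@[simp]
theorem hermitianDilation_apply (f : E) (g : F) :
    A.hermitianDilation (WithLp.toLp 2 (f, g)) = WithLp.toLp 2 ((A†) g, A f) :=
  rfl

theorem re_inner_hermitianDilation_apply (f : E) (g : F) :
    RCLike.re ⟪A.hermitianDilation (WithLp.toLp 2 (f, g)), WithLp.toLp 2 (f, g)⟫_𝕜 =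
      2 * RCLike.re ⟪A f, g⟫_𝕜 := by
  rw [hermitianDilation_apply, WithLp.prod_inner_apply, map_add, adjoint_inner_left,
    ← inner_conj_symm, RCLike.conj_re]
  ring

theorem isSelfAdjoint_hermitianDilation : IsSelfAdjoint A.hermitianDilation := by
  rw [isSelfAdjoint_iff_isSymmetric]
  intro u v
  simp only [coe_coe]
  change ⟪A.hermitianDilation (WithLp.toLp 2 (u.fst, u.snd)), v⟫_𝕜 =
    ⟪u, A.hermitianDilation (WithLp.toLp 2 (v.fst, v.snd))⟫_𝕜
  rw [hermitianDilation_apply, hermitianDilation_apply, WithLp.prod_inner_apply,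
    WithLp.prod_inner_apply, adjoint_inner_left, adjoint_inner_right, add_comm]
  rfl

theorem norm_hermitianDilation : ‖A.hermitianDilation‖ = ‖A‖ := by
  refine le_antisymm (opNorm_le_bound _ (norm_nonneg A) fun u => ?_)
    (opNorm_le_bound _ (norm_nonneg _) fun f => ?_)
  · rw [← sq_le_sq₀ (norm_nonneg _) (by positivity), mul_pow, WithLp.prod_norm_sq_eq_of_L2,
      WithLp.prod_norm_sq_eq_of_L2]
    change ‖(A†) u.snd‖ ^ 2 + ‖A u.fst‖ ^ 2 ≤ ‖A‖ ^ 2 * (‖u.fst‖ ^ 2 + ‖u.snd‖ ^ 2)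
    have h₁ : ‖(A†) u.snd‖ ≤ ‖A‖ * ‖u.snd‖ := by simpa using (A†).le_opNorm u.snd
    have h₂ : ‖A u.fst‖ ≤ ‖A‖ * ‖u.fst‖ := A.le_opNorm u.fst
    calc ‖(A†) u.snd‖ ^ 2 + ‖A u.fst‖ ^ 2 ≤ (‖A‖ * ‖u.snd‖) ^ 2 + (‖A‖ * ‖u.fst‖) ^ 2 := by
          gcongr
      _ = ‖A‖ ^ 2 * (‖u.fst‖ ^ 2 + ‖u.snd‖ ^ 2) := by ring
  · calc ‖A f‖ ≤ ‖A.hermitianDilation (WithLp.toLp 2 (f, 0))‖ :=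
          WithLp.norm_snd_le (x := A.hermitianDilation (WithLp.toLp 2 (f, 0)))
      _ ≤ ‖A.hermitianDilation‖ * ‖f‖ := by
          rw [← WithLp.norm_toLp_fst 2 E F f]; exact A.hermitianDilation.le_opNorm _

theorem _root_.IsCompactOperator.hermitianDilation {A : E →L[𝕜] F} (hA : IsCompactOperator A) :
    IsCompactOperator A.hermitianDilation :=
  ((hA.adjoint.prodMap hA).clm_comp
    ((WithLp.prodContinuousLinearEquiv 2 𝕜 E F).symm : E × F →L[𝕜] WithLp 2 (E × F))).comp_clm
    ((ContinuousLinearEquiv.prodComm 𝕜 E F : E × F →L[𝕜] F × E) ∘L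
      (WithLp.prodContinuousLinearEquiv 2 𝕜 E F : WithLp 2 (E × F) →L[𝕜] E × F))

theorem norm_hermitianDilation_eq_sSup_re_inner :
    ‖A.hermitianDilation‖ =
      sSup {r : ℝ | ∃ u, ‖u‖ = 1 ∧ RCLike.re ⟪A.hermitianDilation u, u⟫_𝕜 = r} := by
  set S := {r : ℝ | ∃ u, ‖u‖ = 1 ∧ RCLike.re ⟪A.hermitianDilation u, u⟫_𝕜 = r}
  have hbdd : BddAbove S := ⟨_, by
    rintro _ ⟨u, hu, rfl⟩; exact A.hermitianDilation.re_inner_apply_self_le_norm hu⟩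
  have hneg : ∀ r ∈ S, -r ∈ S := by
    rintro _ ⟨u, hu, rfl⟩
    refine ⟨WithLp.toLp 2 (u.fst, -u.snd), ?_, ?_⟩
    · rw [← hu, WithLp.prod_norm_eq_of_L2, WithLp.prod_norm_eq_of_L2]
      simp
    · change _ = -RCLike.re
        ⟪A.hermitianDilation (WithLp.toLp 2 (u.fst, u.snd)), WithLp.toLp 2 (u.fst, u.snd)⟫_𝕜
      rw [re_inner_hermitianDilation_apply, re_inner_hermitianDilation_apply, inner_neg_right,
        map_neg]
      ring
  have hS : 0 ≤ sSup S := by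
    rcases S.eq_empty_or_nonempty with hS | ⟨r, hr⟩
    · rw [hS, Real.sSup_empty]
    · linarith [le_csSup hbdd hr, le_csSup hbdd (hneg r hr)]
  refine le_antisymm ?_ (Real.sSup_le (fun r ⟨u, hu, hr⟩ => hr ▸
    A.hermitianDilation.re_inner_apply_self_le_norm hu) (norm_nonneg _))
  rw [norm_hermitianDilation]
  refine opNorm_le_of_re_inner_le hS fun f g hf hg => le_csSup hbdd ?_
  set c : 𝕜 := (((√2)⁻¹ : ℝ) : 𝕜)
  have hc : ‖c‖ = (√2)⁻¹ := by simp [c]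
  refine ⟨c • WithLp.toLp 2 (f, g), ?_, ?_⟩
  · rw [norm_smul, hc, WithLp.prod_norm_eq_of_L2]
    norm_num [hf, hg]
  · rw [← reApplyInnerSelf_apply, reApplyInnerSelf_smul, reApplyInnerSelf_apply,
      re_inner_hermitianDilation_apply, hc, inv_pow, Real.sq_sqrt zero_le_two]
    field_simp

end ContinuousLinearMap

end Adjoint

open NormedSpace
theorem stmt_2_general {𝕜 X H : Type*} [RCLike 𝕜]
    [NormedAddCommGroup X] [NormedSpace ℝ X]
    [NormedAddCommGroup H] [InnerProductSpace 𝕜 H] [CompleteSpace H]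
    (T : StrongDual ℝ (StrongDual ℝ X) → (H →L[𝕜] H))
    (c C : ℝ)
    (hlow : ∀ b : StrongDual ℝ (StrongDual ℝ X), c * ‖b‖ ≤ ‖T b‖)
    (hup : ∀ b : StrongDual ℝ (StrongDual ℝ X), ‖T b‖ ≤ C * ‖b‖)
    (hcomp : ∀ a : X, IsCompactOperator (T (inclusionInDoubleDual ℝ X a)))
    (Tt : StrongDual ℝ (StrongDual ℝ X) → (WithLp 2 (H × H) →L[𝕜] WithLp 2 (H × H)))
    (hTt : ∀ (b : StrongDual ℝ (StrongDual ℝ X)) (f g : H),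
      Tt b ((WithLp.equiv 2 (H × H)).symm (f, g)) =
        (WithLp.equiv 2 (H × H)).symm ((ContinuousLinearMap.adjoint (T b)) g, (T b) f)) :
    -- (A1) for `T̃` with the same constants
    ((∀ b : StrongDual ℝ (StrongDual ℝ X), c * ‖b‖ ≤ ‖Tt b‖) ∧
      (∀ b : StrongDual ℝ (StrongDual ℝ X), ‖Tt b‖ ≤ C * ‖b‖) ∧
      (∀ a : X, IsCompactOperator (Tt (inclusionInDoubleDual ℝ X a)))) ∧
    -- (A2) for `T̃`
    ((∀ b : StrongDual ℝ (StrongDual ℝ X), IsSelfAdjoint (Tt b)) ∧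
      (∀ b : StrongDual ℝ (StrongDual ℝ X), ‖Tt b‖ = sSup {r : ℝ | ∃ u : WithLp 2 (H × H),
        ‖u‖ = 1 ∧ RCLike.re (inner 𝕜 ((Tt b) u) u : 𝕜) = r})) ∧
    -- if `T` also satisfies (A2), the quadratic form of `T̃` is the Gâteaux derivative of `Q`
    (((∀ b : StrongDual ℝ (StrongDual ℝ X), IsSelfAdjoint (T b)) ∧
        (∀ b : StrongDual ℝ (StrongDual ℝ X),
          ‖T b‖ = sSup {r : ℝ | ∃ f : H, ‖f‖ = 1 ∧ RCLike.re (inner 𝕜 ((T b) f) f : 𝕜) = r})) →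
      (∀ (b : StrongDual ℝ (StrongDual ℝ X)) (f g : H),
        RCLike.re (inner 𝕜 ((Tt b) ((WithLp.equiv 2 (H × H)).symm (f, g)))
            ((WithLp.equiv 2 (H × H)).symm (f, g)) : 𝕜) =
          2 * RCLike.re (inner 𝕜 ((T b) f) g : 𝕜)) ∧
      (∀ Q' : H → H → StrongDual ℝ X,
        (∀ (a : X) (f g : H),
          Q' f g a = 2 * RCLike.re (inner 𝕜 ((T (inclusionInDoubleDual ℝ X a)) f) g : 𝕜)) →
        ∀ (a : X) (f g : H),
          RCLike.re (inner 𝕜 ((Tt (inclusionInDoubleDual ℝ X a))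
              ((WithLp.equiv 2 (H × H)).symm (f, g)))
              ((WithLp.equiv 2 (H × H)).symm (f, g)) : 𝕜) = Q' f g a)) := by
  obtain rfl : Tt = fun b => (T b).hermitianDilation :=
    funext fun b => ContinuousLinearMap.ext fun u => hTt b u.fst u.snd
  refine ⟨⟨fun b => ?_, fun b => ?_, fun a => (hcomp a).hermitianDilation⟩,
    ⟨fun b => (T b).isSelfAdjoint_hermitianDilation,
      fun b => (T b).norm_hermitianDilation_eq_sSup_re_inner⟩,
    fun _ => ⟨fun b f g => (T b).re_inner_hermitianDilation_apply f g, fun Q' hQ' a f g => ?_⟩⟩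
  · exact (T b).norm_hermitianDilation ▸ hlow b
  · exact (T b).norm_hermitianDilation ▸ hup b
  · rw [hQ', ← (T _).re_inner_hermitianDilation_apply f g]
    rfl

/-- if the bilinear map `(b, f) ↦ T_b f : X** × H → H` satisfies
assumption (A1) with constants `0 < c ≤ C` (two-sided norm bounds and
compactness of `T_b` for `b` in the canonical image of `X`), then the modified
operator `T̃_b(f, g) := (T_b* g, T_b f)` on the Hilbert space direct sum
`H × H` (realised as `WithLp 2 (H × H)`) satisfies (A1) with the same
constants and also satisfies (A2) (self-adjointness and the norm being the
supremum of `Re ⟨T̃_b u, u⟩` over the unit sphere).  Moreover, if `T` itself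
also satisfies (A2), then `⟨T̃_b(f,g), (f,g)⟩ = 2 Re ⟨T_b f, g⟩` for all
`b ∈ X**` and `f, g ∈ H`, which for `b ∈ X` equals `⟨b, Q'_f g⟩`, where the
Gâteaux derivative `Q'_f g ∈ X*` of `Q` is determined by
`⟨a, Q'_f g⟩ = 2 Re ⟨T_a f, g⟩` for `a ∈ X`. -/
theorem stmt_2 {𝕜 X H : Type*} [RCLike 𝕜]
    [NormedAddCommGroup X] [NormedSpace ℝ X] [CompleteSpace X]
    [TopologicalSpace.SeparableSpace (StrongDual ℝ X)]
    [NormedAddCommGroup H] [InnerProductSpace 𝕜 H] [CompleteSpace H]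
    (T : StrongDual ℝ (StrongDual ℝ X) → (H →L[𝕜] H))
    (T_add : ∀ (b₁ b₂ : StrongDual ℝ (StrongDual ℝ X)) (ω : H), T (b₁ + b₂) ω = T b₁ ω + T b₂ ω)
    (T_smul : ∀ (r : ℝ) (b : StrongDual ℝ (StrongDual ℝ X)) (ω : H), T (r • b) ω = (r : 𝕜) • T b ω)
    (c C : ℝ) (hc : 0 < c) (hcC : c ≤ C)
    (hlow : ∀ b : StrongDual ℝ (StrongDual ℝ X), c * ‖b‖ ≤ ‖T b‖)
    (hup : ∀ b : StrongDual ℝ (StrongDual ℝ X), ‖T b‖ ≤ C * ‖b‖)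
    (hcomp : ∀ a : X, IsCompactOperator (T (inclusionInDoubleDual ℝ X a)))
    (Tt : StrongDual ℝ (StrongDual ℝ X) → (WithLp 2 (H × H) →L[𝕜] WithLp 2 (H × H)))
    (hTt : ∀ (b : StrongDual ℝ (StrongDual ℝ X)) (f g : H),
      Tt b ((WithLp.equiv 2 (H × H)).symm (f, g)) =
        (WithLp.equiv 2 (H × H)).symm ((ContinuousLinearMap.adjoint (T b)) g, (T b) f)) :
    -- (A1) for `T̃` with the same constants
    ((∀ b : StrongDual ℝ (StrongDual ℝ X), c * ‖b‖ ≤ ‖Tt b‖) ∧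
      (∀ b : StrongDual ℝ (StrongDual ℝ X), ‖Tt b‖ ≤ C * ‖b‖) ∧
      (∀ a : X, IsCompactOperator (Tt (inclusionInDoubleDual ℝ X a)))) ∧
    -- (A2) for `T̃`
    ((∀ b : StrongDual ℝ (StrongDual ℝ X), IsSelfAdjoint (Tt b)) ∧
      (∀ b : StrongDual ℝ (StrongDual ℝ X), ‖Tt b‖ = sSup {r : ℝ | ∃ u : WithLp 2 (H × H),
        ‖u‖ = 1 ∧ RCLike.re (inner 𝕜 ((Tt b) u) u : 𝕜) = r})) ∧
    -- if `T` also satisfies (A2), the quadratic form of `T̃` is the Gâteaux derivative of `Q`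
    (((∀ b : StrongDual ℝ (StrongDual ℝ X), IsSelfAdjoint (T b)) ∧
        (∀ b : StrongDual ℝ (StrongDual ℝ X),
          ‖T b‖ = sSup {r : ℝ | ∃ f : H, ‖f‖ = 1 ∧ RCLike.re (inner 𝕜 ((T b) f) f : 𝕜) = r})) →
      (∀ (b : StrongDual ℝ (StrongDual ℝ X)) (f g : H),
        RCLike.re (inner 𝕜 ((Tt b) ((WithLp.equiv 2 (H × H)).symm (f, g)))
            ((WithLp.equiv 2 (H × H)).symm (f, g)) : 𝕜) =
          2 * RCLike.re (inner 𝕜 ((T b) f) g : 𝕜)) ∧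
      (∀ Q' : H → H → StrongDual ℝ X,
        (∀ (a : X) (f g : H),
          Q' f g a = 2 * RCLike.re (inner 𝕜 ((T (inclusionInDoubleDual ℝ X a)) f) g : 𝕜)) →
        ∀ (a : X) (f g : H),
          RCLike.re (inner 𝕜 ((Tt (inclusionInDoubleDual ℝ X a))
              ((WithLp.equiv 2 (H × H)).symm (f, g)))
              ((WithLp.equiv 2 (H × H)).symm (f, g)) : 𝕜) = Q' f g a)) :=
  stmt_2_general T c C hlow hup hcomp Tt hTt
end

section
/- Under the stated setting, if f ∈ X* and there exists γ ∈ H with Qγ = f, then there exists a minimum norm solution: an element ω ∈ H with Qω = f such that ‖ω‖_H ≤ ‖γ'‖_H for every γ' ∈ H with Qγ' = f. -/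
open NormedSpace Filter Topology

noncomputable section

/-- The setting of Coifman–Lions–Meyer–Semmes-type quadratic operators:
`X` is a real Banach space, `H` a Hilbert space over `𝕜 ∈ {ℝ, ℂ}`,
`T` is a bilinear map `X** × H → H` satisfying assumption (A1)
(two-sided norm bounds and compactness of `T_b` for `b` in the canonical
image of `X`) and assumption (A2) (`T_b` self-adjoint with norm equal to the
supremum of `⟨T_b f, f⟩` over the unit sphere), together with the quadratic
map `Q : H → X*` determined by `⟨a, Qω⟩ = ⟨T_a ω, ω⟩` for `a ∈ X`, and its
Gâteaux derivative `Q'` determined by `⟨a, Q'_ω γ⟩ = 2 Re ⟨T_a ω, γ⟩`. -/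
structure CLMS (𝕜 X H : Type*) [RCLike 𝕜]
    [NormedAddCommGroup X] [NormedSpace ℝ X] [CompleteSpace X]
    [NormedAddCommGroup H] [InnerProductSpace 𝕜 H] [CompleteSpace H] where
  T : StrongDual ℝ (StrongDual ℝ X) → (H →L[𝕜] H)
  T_add : ∀ (b₁ b₂ : StrongDual ℝ (StrongDual ℝ X)) (ω : H), T (b₁ + b₂) ω = T b₁ ω + T b₂ ω
  T_smul : ∀ (r : ℝ) (b : StrongDual ℝ (StrongDual ℝ X)) (ω : H), T (r • b) ω = (r : 𝕜) • T b ω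
  c : ℝ
  C : ℝ
  c_pos : 0 < c
  c_le_C : c ≤ C
  lower : ∀ b : StrongDual ℝ (StrongDual ℝ X), c * ‖b‖ ≤ ‖T b‖
  upper : ∀ b : StrongDual ℝ (StrongDual ℝ X), ‖T b‖ ≤ C * ‖b‖
  compact : ∀ a : X, IsCompactOperator (T (inclusionInDoubleDual ℝ X a))
  selfAdj : ∀ b : StrongDual ℝ (StrongDual ℝ X), IsSelfAdjoint (T b)
  norm_eq : ∀ b : StrongDual ℝ (StrongDual ℝ X),
    ‖T b‖ = sSup {r : ℝ | ∃ f : H, ‖f‖ = 1 ∧ RCLike.re (inner 𝕜 ((T b) f) f : 𝕜) = r}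
  Q : H → StrongDual ℝ X
  hQ : ∀ (a : X) (ω : H),
    Q ω a = RCLike.re (inner 𝕜 ((T (inclusionInDoubleDual ℝ X a)) ω) ω : 𝕜)
  Q' : H → H → StrongDual ℝ X
  hQ' : ∀ (a : X) (ω γ : H),
    Q' ω γ a = 2 * RCLike.re (inner 𝕜 ((T (inclusionInDoubleDual ℝ X a)) ω) γ : 𝕜)

namespace CLMS

variable {𝕜 X H : Type*} [RCLike 𝕜]
    [NormedAddCommGroup X] [NormedSpace ℝ X] [CompleteSpace X]
    [NormedAddCommGroup H] [InnerProductSpace 𝕜 H] [CompleteSpace H]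

/-- The equivalent norm `‖b‖_{X_Q} := ‖T_b‖` on `X`. -/
def normQ (S : CLMS 𝕜 X H) (b : X) : ℝ := ‖S.T (inclusionInDoubleDual ℝ X b)‖

/-- The dual norm `‖f‖_{X_Q*} := sup {⟨b, f⟩ : b ∈ X, ‖b‖_{X_Q} ≤ 1}` on `X*`. -/
def dualNormQ (S : CLMS 𝕜 X H) (f : StrongDual ℝ X) : ℝ :=
  sSup {r : ℝ | ∃ b : X, S.normQ b ≤ 1 ∧ f b = r}

/-- The set `𝒜 = {ω ∈ H : ‖ω‖ = 1, ‖Qω‖_{X_Q*} = 1}`. -/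
def A (S : CLMS 𝕜 X H) : Set H := {ω : H | ‖ω‖ = 1 ∧ S.dualNormQ (S.Q ω) = 1}

/-- The duality mapping `D(b) = {h ∈ X* : ‖h‖_{X_Q*} = 1, ⟨b, h⟩ = 1}`. -/
def D (S : CLMS 𝕜 X H) (b : X) : Set (StrongDual ℝ X) :=
  {h : StrongDual ℝ X | S.dualNormQ h = 1 ∧ h b = 1}

/-- `ω` is a minimum norm solution (of `Qγ = Qω`). -/
def MinNormSol (S : CLMS 𝕜 X H) (ω : H) : Prop :=
  ∀ γ : H, S.Q γ = S.Q ω → ‖ω‖ ≤ ‖γ‖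

/-- Assumption (Sym): if `ω, γ ∈ 𝒜` have `Qω = Qγ`, then `Q'_ω (c γ) ≠ 0`
for some unimodular `c ∈ 𝕜`. -/
def Sym (S : CLMS 𝕜 X H) : Prop :=
  ∀ ω ∈ S.A, ∀ γ ∈ S.A, S.Q ω = S.Q γ → ∃ c : 𝕜, ‖c‖ = 1 ∧ S.Q' ω (c • γ) ≠ 0

/-- Assumption (A3): the canonical pairing of `b ∈ X**` with `Qω ∈ X*`
equals `⟨T_b ω, ω⟩`. -/
def A3 (S : CLMS 𝕜 X H) : Prop :=
  ∀ (b : StrongDual ℝ (StrongDual ℝ X)) (ω : H), b (S.Q ω) = RCLike.re (inner 𝕜 ((S.T b) ω) ω : 𝕜)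

end CLMS

/-
Take a minimizing sequence for `‖·‖` on the solution set `{γ' | Qγ' = f}`; it is bounded, so
by Banach–Alaoglu (through the Riesz isomorphism `H ≃ H*`) it converges weakly along an
ultrafilter to some `ω`, and the norm being weakly lower semicontinuous, `ω` has the minimal
norm. Each `T_a` with `a ∈ X` is compact, so it turns this weak convergence into norm
convergence, and the quadratic forms `⟨T_a γ_n, γ_n⟩ = f(a)` converge to `⟨T_a ω, ω⟩`;
hence `Qω = f`.
-/

open scoped InnerProductSpace

theorem IsCompact.exists_tendsto_ultrafilter {α ι : Type*} [TopologicalSpace α] {K : Set α}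
    (hK : IsCompact K) (u : Ultrafilter ι) {g : ι → α} (hg : ∀ i, g i ∈ K) :
    ∃ x ∈ K, Tendsto g u (𝓝 x) :=
  hK.ultrafilter_le_nhds' (u.map g) (Ultrafilter.mem_map.mpr (univ_mem' hg))

section WeakLimits

variable {𝕜 H ι : Type*} [RCLike 𝕜] [NormedAddCommGroup H] [InnerProductSpace 𝕜 H]

theorem exists_tendsto_inner_of_norm_le [CompleteSpace H] (u : Ultrafilter ι) {g : ι → H}
    {R : ℝ} (hg : ∀ i, ‖g i‖ ≤ R) :
    ∃ ω : H, ∀ y, Tendsto (fun i => ⟪g i, y⟫_𝕜) u (𝓝 ⟪ω, y⟫_𝕜) := by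
  let J : H → WeakDual 𝕜 H := fun x => StrongDual.toWeakDual (InnerProductSpace.toDual 𝕜 H x)
  have hJ : ∀ i, J (g i) ∈ WeakDual.toStrongDual ⁻¹' Metric.closedBall 0 R := fun i => by
    simpa [J] using hg i
  obtain ⟨φ, -, hφ⟩ :=
    (WeakDual.isCompact_closedBall (0 : StrongDual 𝕜 H) R).exists_tendsto_ultrafilter u hJ
  refine ⟨(InnerProductSpace.toDual 𝕜 H).symm (WeakDual.toStrongDual φ), fun y => ?_⟩
  have := ((WeakDual.eval_continuous y).tendsto φ).comp hφ
  simpa [J, Function.comp_def, InnerProductSpace.toDual_symm_apply] using this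

variable {l : Filter ι} {g : ι → H} {ω : H}

theorem norm_le_of_tendsto_inner [l.NeBot] (hw : ∀ y, Tendsto (fun i => ⟪g i, y⟫_𝕜) l (𝓝 ⟪ω, y⟫_𝕜))
    {r : ℝ} (hr : Tendsto (fun i => ‖g i‖) l (𝓝 r)) : ‖ω‖ ≤ r := by
  have hr0 : 0 ≤ r := ge_of_tendsto' hr fun i => norm_nonneg _
  have hsq : ‖ω‖ ^ 2 ≤ r * ‖ω‖ := by
    have hre : Tendsto (fun i => RCLike.re ⟪g i, ω⟫_𝕜) l (𝓝 (‖ω‖ ^ 2)) := by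
      rw [← inner_self_eq_norm_sq (𝕜 := 𝕜)]
      exact (RCLike.continuous_re.tendsto _).comp (hw ω)
    exact le_of_tendsto_of_tendsto' hre (hr.mul_const ‖ω‖) fun i =>
      (RCLike.re_le_norm _).trans (norm_inner_le_norm _ _)
  nlinarith [norm_nonneg ω]

theorem tendsto_inner_apply_self {T : H →L[𝕜] H} (hT : Tendsto (fun i => T (g i)) l (𝓝 (T ω)))
    (hw : ∀ y, Tendsto (fun i => ⟪g i, y⟫_𝕜) l (𝓝 ⟪ω, y⟫_𝕜)) {R : ℝ} (hg : ∀ i, ‖g i‖ ≤ R) :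
    Tendsto (fun i => ⟪T (g i), g i⟫_𝕜) l (𝓝 ⟪T ω, ω⟫_𝕜) := by
  have hdiff : Tendsto (fun i => ⟪T (g i) - T ω, g i⟫_𝕜) l (𝓝 0) := by
    refine squeeze_zero_norm (fun i => (norm_inner_le_norm _ _).trans
      (mul_le_mul_of_nonneg_left (hg i) (norm_nonneg _))) ?_
    simpa using ((tendsto_iff_norm_sub_tendsto_zero.mp hT).mul_const R)
  have hconj : Tendsto (fun i => ⟪T ω, g i⟫_𝕜) l (𝓝 ⟪T ω, ω⟫_𝕜) := by
    simpa only [RCLike.star_def, inner_conj_symm] using (hw (T ω)).star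
  simpa [inner_sub_left] using hdiff.add hconj

end WeakLimits

theorem IsCompactOperator.tendsto_of_tendsto_inner {𝕜 H E ι : Type*} [RCLike 𝕜]
    [NormedAddCommGroup H] [InnerProductSpace 𝕜 H] [CompleteSpace H]
    [NormedAddCommGroup E] [InnerProductSpace 𝕜 E] [CompleteSpace E]
    {T : H →L[𝕜] E} (hT : IsCompactOperator T) {u : Ultrafilter ι} {g : ι → H} {ω : H}
    (hw : ∀ y, Tendsto (fun i => ⟪g i, y⟫_𝕜) u (𝓝 ⟪ω, y⟫_𝕜)) {R : ℝ} (hg : ∀ i, ‖g i‖ ≤ R) :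
    Tendsto (fun i => T (g i)) u (𝓝 (T ω)) := by
  have hmem : ∀ i, T (g i) ∈ closure (T '' Metric.closedBall 0 R) := fun i =>
    subset_closure ⟨g i, by simpa using hg i, rfl⟩
  obtain ⟨z, -, hz⟩ := (hT.isCompact_closure_image_closedBall R).exists_tendsto_ultrafilter u hmem
  -- `z` and `T ω` are both weak limits of `T (g i)`: move `T` across the inner product.
  suffices z = T ω by rwa [← this]
  refine ext_inner_right 𝕜 fun v => tendsto_nhds_unique (hz.inner tendsto_const_nhds) ?_
  simpa only [ContinuousLinearMap.adjoint_inner_right] using hw (ContinuousLinearMap.adjoint T v)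

namespace CLMS

variable {𝕜 X H ι : Type*} [RCLike 𝕜]
    [NormedAddCommGroup X] [NormedSpace ℝ X] [CompleteSpace X]
    [NormedAddCommGroup H] [InnerProductSpace 𝕜 H] [CompleteSpace H]

theorem Q_eq_of_tendsto_inner (S : CLMS 𝕜 X H) {f : StrongDual ℝ X} {u : Ultrafilter ι}
    {g : ι → H} (hgf : ∀ i, S.Q (g i) = f) {ω : H}
    (hw : ∀ y, Tendsto (fun i => ⟪g i, y⟫_𝕜) u (𝓝 ⟪ω, y⟫_𝕜)) {R : ℝ} (hg : ∀ i, ‖g i‖ ≤ R) :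
    S.Q ω = f := by
  ext a
  have hT := (S.compact a).tendsto_of_tendsto_inner hw hg
  have hquad := (RCLike.continuous_re.tendsto _).comp (tendsto_inner_apply_self hT hw hg)
  simp only [Function.comp_def, ← S.hQ, hgf] at hquad
  exact tendsto_nhds_unique hquad tendsto_const_nhds

end CLMS

theorem stmt_3_general {𝕜 X H : Type*} [RCLike 𝕜]
    [NormedAddCommGroup X] [NormedSpace ℝ X] [CompleteSpace X]
    [NormedAddCommGroup H] [InnerProductSpace 𝕜 H] [CompleteSpace H]
    (S : CLMS 𝕜 X H) (f : StrongDual ℝ X) (γ : H) (hγ : S.Q γ = f) :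
    ∃ ω : H, S.Q ω = f ∧ ∀ γ' : H, S.Q γ' = f → ‖ω‖ ≤ ‖γ'‖ := by
  set norms := norm '' {γ' : H | S.Q γ' = f}
  have hbdd : BddBelow norms := ⟨0, by rintro _ ⟨x, -, rfl⟩; exact norm_nonneg x⟩
  obtain ⟨r, hr_anti, hr_lim, hr_mem⟩ := exists_seq_tendsto_sInf (S := norms) ⟨‖γ‖, γ, hγ, rfl⟩ hbdd
  choose g hgf hgr using hr_mem
  have hg : ∀ n, ‖g n‖ ≤ ‖g 0‖ := fun n => by simpa only [hgr] using hr_anti (Nat.zero_le n)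
  let u : Ultrafilter ℕ := Ultrafilter.of atTop
  obtain ⟨ω, hw⟩ := exists_tendsto_inner_of_norm_le (𝕜 := 𝕜) u hg
  have hnorm : Tendsto (fun n => ‖g n‖) u (𝓝 (sInf norms)) := by
    simpa only [hgr] using hr_lim.mono_left (Ultrafilter.of_le atTop)
  exact ⟨ω, S.Q_eq_of_tendsto_inner hgf hw hg, fun γ' hγ' =>
    (norm_le_of_tendsto_inner hw hnorm).trans (csInf_le hbdd ⟨γ', hγ', rfl⟩)⟩

/-- if `Qγ = f` is solvable then it has a minimum norm solution. -/
theorem stmt_3 {𝕜 X H : Type*} [RCLike 𝕜]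
    [NormedAddCommGroup X] [NormedSpace ℝ X] [CompleteSpace X]
    [TopologicalSpace.SeparableSpace (StrongDual ℝ X)]
    [NormedAddCommGroup H] [InnerProductSpace 𝕜 H] [CompleteSpace H]
    (S : CLMS 𝕜 X H) (f : StrongDual ℝ X) (γ : H) (hγ : S.Q γ = f) :
    ∃ ω : H, S.Q ω = f ∧ ∀ γ' : H, S.Q γ' = f → ‖ω‖ ≤ ‖γ'‖ :=
  stmt_3_general S f γ hγ
end
end

section
/- Under the stated setting, suppose that (a) for every f ∈ X* there exists a sequence (γ_j) in H such that ⟨a, Qγ_j⟩ → ⟨a, f⟩ for every a ∈ X (i.e. the range of Q is weak*-sequentially dense in X*), and (b) there is a constant K > 0 such that every minimum norm solution ω satisfies ‖ω‖_H² ≤ K·‖Qω‖_{X_Q*}. Then Q maps H onto X*. -/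
open NormedSpace Filter Topology

noncomputable section

/-! Given `f`, take `Q γ_j → f` weak*. By uniform boundedness `‖Q γ_j‖` is bounded, so replacing
`γ_j` by a minimum norm solution `ω_j` with the same image, the a priori bound makes `(ω_j)` bounded.
A subsequence converges weakly to some `z`, and since every `T_a` is compact it maps this
subsequence to a norm convergent one, so `⟨a, Q ω_j⟩ = ⟨T_a ω_j, ω_j⟩ → ⟨T_a z, z⟩`: thus `Q z = f`.
Minimum norm solutions exist by the same weak compactness together with weak lower
semicontinuity of the norm. -/

open scoped InnerProductSpace

section WeakConvergence

variable {𝕜 H : Type*} [RCLike 𝕜] [NormedAddCommGroup H] [InnerProductSpace 𝕜 H]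

theorem exists_subseq_tendsto_inner_of_bounded [CompleteSpace H] (x : ℕ → H) {R : ℝ}
    (hx : ∀ n, ‖x n‖ ≤ R) :
    ∃ (z : H) (φ : ℕ → ℕ), StrictMono φ ∧
      ∀ v : H, Tendsto (fun k => ⟪x (φ k), v⟫_𝕜) atTop (𝓝 ⟪z, v⟫_𝕜) := by
  set M := (Submodule.span 𝕜 (Set.range x)).topologicalClosure
  -- sequential Banach–Alaoglu applies in the separable space `M`, and Riesz turns the limit into `z`
  have : TopologicalSpace.SeparableSpace M :=
    ((Set.countable_range x).isSeparable.span.closure).separableSpace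
  let y : ℕ → M := fun n =>
    ⟨x n, Submodule.le_topologicalClosure _ (Submodule.subset_span ⟨n, rfl⟩)⟩
  have hy : ∀ n, innerSL 𝕜 (y n) ∈ Metric.closedBall 0 R := fun n => by
    simpa [y] using hx n
  obtain ⟨L, -, φ, hφ, hL⟩ := WeakDual.isSeqCompact_closedBall (𝕜 := 𝕜) (E := M) 0 R
    (x := fun n => StrongDual.toWeakDual (innerSL 𝕜 (y n))) hy
  refine ⟨(InnerProductSpace.toDual 𝕜 M).symm (WeakDual.toStrongDual L), φ, hφ, fun v => ?_⟩
  have hP : ∀ u : M, ⟪(u : H), v⟫_𝕜 = ⟪u, M.orthogonalProjectionOnto v⟫_𝕜 := fun u =>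
    (Submodule.inner_orthogonalProjectionOnto_eq_of_mem_left u v).symm
  rw [hP, InnerProductSpace.toDual_symm_apply]
  exact (((WeakDual.eval_continuous _).tendsto L).comp hL).congr fun k => (hP (y (φ k))).symm

theorem tendsto_inner_of_tendsto_of_tendsto_inner {x y : ℕ → H} {x₀ y₀ : H} {R : ℝ}
    (hx : ∀ k, ‖x k‖ ≤ R) (hxw : ∀ v, Tendsto (fun k => ⟪x k, v⟫_𝕜) atTop (𝓝 ⟪x₀, v⟫_𝕜))
    (hy : Tendsto y atTop (𝓝 y₀)) :
    Tendsto (fun k => ⟪y k, x k⟫_𝕜) atTop (𝓝 ⟪y₀, x₀⟫_𝕜) := by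
  have hdiff : Tendsto (fun k => ⟪y k - y₀, x k⟫_𝕜) atTop (𝓝 0) := by
    refine squeeze_zero_norm (fun k => (norm_inner_le_norm _ _).trans
      (mul_le_mul_of_nonneg_left (hx k) (norm_nonneg _))) ?_
    simpa using (tendsto_iff_norm_sub_tendsto_zero.mp hy).mul_const R
  have hfixed : Tendsto (fun k => ⟪y₀, x k⟫_𝕜) atTop (𝓝 ⟪y₀, x₀⟫_𝕜) := by
    simpa only [Function.comp_def, inner_conj_symm] using
      (RCLike.continuous_conj.tendsto _).comp (hxw y₀)
  simpa only [inner_sub_left, sub_add_cancel, zero_add] using hdiff.add hfixed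

theorem norm_le_of_tendsto_inner_s4 {x : ℕ → H} {z : H} {r : ℕ → ℝ} {m : ℝ}
    (hxw : ∀ v, Tendsto (fun k => ⟪x k, v⟫_𝕜) atTop (𝓝 ⟪z, v⟫_𝕜)) (hx : ∀ k, ‖x k‖ ≤ r k)
    (hr : Tendsto r atTop (𝓝 m)) : ‖z‖ ≤ m := by
  have hm : 0 ≤ m := ge_of_tendsto' hr fun k => (norm_nonneg _).trans (hx k)
  have hsq : ‖z‖ ^ 2 ≤ m * ‖z‖ := by
    refine le_of_tendsto_of_tendsto' (f := fun k => RCLike.re ⟪x k, z⟫_𝕜) ?_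
      (hr.mul_const ‖z‖) fun k => ?_
    · simpa only [Function.comp_def, inner_self_eq_norm_sq] using
        (RCLike.continuous_re.tendsto _).comp (hxw z)
    · calc RCLike.re ⟪x k, z⟫_𝕜 ≤ ‖x k‖ * ‖z‖ := re_inner_le_norm _ _
        _ ≤ r k * ‖z‖ := by gcongr; exact hx k
  nlinarith [norm_nonneg z]

theorem exists_forall_norm_le_of_weakSeqClosed [CompleteSpace H] {s : Set H} (hne : s.Nonempty)
    (hs : ∀ (x : ℕ → H) (z : H) (R : ℝ), (∀ k, x k ∈ s) → (∀ k, ‖x k‖ ≤ R) →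
      (∀ v, Tendsto (fun k => ⟪x k, v⟫_𝕜) atTop (𝓝 ⟪z, v⟫_𝕜)) → z ∈ s) :
    ∃ z ∈ s, ∀ γ ∈ s, ‖z‖ ≤ ‖γ‖ := by
  have hbdd : BddBelow (norm '' s) := ⟨0, by rintro _ ⟨γ, -, rfl⟩; exact norm_nonneg γ⟩
  obtain ⟨u, hu_anti, hu_lim, hu_mem⟩ := exists_seq_tendsto_sInf (hne.image norm) hbdd
  choose x hxs hxu using hu_mem
  have hx : ∀ k, ‖x k‖ ≤ u 0 := fun k => (hxu k).trans_le (hu_anti (Nat.zero_le k))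
  obtain ⟨z, φ, hφ, hz⟩ := exists_subseq_tendsto_inner_of_bounded (𝕜 := 𝕜) x hx
  refine ⟨z, hs _ z _ (fun k => hxs (φ k)) (fun k => hx (φ k)) hz, fun γ hγ => ?_⟩
  calc ‖z‖ ≤ sInf (norm '' s) :=
        norm_le_of_tendsto_inner_s4 hz (fun k => (hxu (φ k)).le) (hu_lim.comp hφ.tendsto_atTop)
    _ ≤ ‖γ‖ := csInf_le hbdd ⟨γ, hγ, rfl⟩

variable {F : Type*} [NormedAddCommGroup F] [InnerProductSpace 𝕜 F]

theorem IsCompactOperator.tendsto_apply_of_tendsto_inner [CompleteSpace H] [CompleteSpace F]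
    {T : H →L[𝕜] F} (hT : IsCompactOperator T) {x : ℕ → H} {z : H} {R : ℝ}
    (hx : ∀ k, ‖x k‖ ≤ R) (hxw : ∀ v, Tendsto (fun k => ⟪x k, v⟫_𝕜) atTop (𝓝 ⟪z, v⟫_𝕜)) :
    Tendsto (fun k => T (x k)) atTop (𝓝 (T z)) := by
  obtain ⟨K, hK, hTK⟩ := hT.image_closedBall_subset_compact (f := (T : H →ₗ[𝕜] F)) R
  refine tendsto_of_subseq_tendsto fun ns hns => ?_
  have hmem : ∀ k, T (x (ns k)) ∈ K := fun k => hTK ⟨x (ns k), by simpa using hx (ns k), rfl⟩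
  obtain ⟨w, -, ms, hms, hlim⟩ := hK.tendsto_subseq hmem
  refine ⟨ms, ?_⟩
  -- any norm limit `w` of `T x_k` is also its weak limit, which is `T z` by duality with `T†`
  suffices w = T z from this ▸ hlim
  refine ext_inner_right 𝕜 fun v => tendsto_nhds_unique (hlim.inner tendsto_const_nhds) ?_
  simpa only [Function.comp_def, ContinuousLinearMap.adjoint_inner_right] using
    (hxw (T.adjoint v)).comp (hns.comp hms.tendsto_atTop)

end WeakConvergence

namespace CLMS

variable {𝕜 X H : Type*} [RCLike 𝕜]
    [NormedAddCommGroup X] [NormedSpace ℝ X] [CompleteSpace X]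
    [NormedAddCommGroup H] [InnerProductSpace 𝕜 H] [CompleteSpace H]

theorem tendsto_Q_apply (S : CLMS 𝕜 X H) {x : ℕ → H} {z : H} {R : ℝ} (hx : ∀ k, ‖x k‖ ≤ R)
    (hxw : ∀ v, Tendsto (fun k => ⟪x k, v⟫_𝕜) atTop (𝓝 ⟪z, v⟫_𝕜)) (a : X) :
    Tendsto (fun k => S.Q (x k) a) atTop (𝓝 (S.Q z a)) := by
  simp only [S.hQ]
  exact (RCLike.continuous_re.tendsto _).comp <| tendsto_inner_of_tendsto_of_tendsto_inner hx hxw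
    ((S.compact a).tendsto_apply_of_tendsto_inner hx hxw)

theorem exists_Q_eq_of_tendsto (S : CLMS 𝕜 X H) {ω : ℕ → H} {R : ℝ} (hω : ∀ j, ‖ω j‖ ≤ R)
    {f : StrongDual ℝ X} (hf : ∀ a, Tendsto (fun j => S.Q (ω j) a) atTop (𝓝 (f a))) :
    ∃ z, S.Q z = f := by
  obtain ⟨z, φ, hφ, hz⟩ := exists_subseq_tendsto_inner_of_bounded (𝕜 := 𝕜) ω hω
  exact ⟨z, ContinuousLinearMap.ext fun a => tendsto_nhds_unique
    (S.tendsto_Q_apply (fun k => hω (φ k)) hz a) ((hf a).comp hφ.tendsto_atTop)⟩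

theorem exists_minNormSol (S : CLMS 𝕜 X H) (γ : H) :
    ∃ ω, S.Q ω = S.Q γ ∧ S.MinNormSol ω := by
  obtain ⟨ω, hω, hmin⟩ := exists_forall_norm_le_of_weakSeqClosed (𝕜 := 𝕜)
    (s := {ω | S.Q ω = S.Q γ}) ⟨γ, rfl⟩ fun x z _ hxs hx hxw =>
      ContinuousLinearMap.ext fun a => tendsto_nhds_unique (S.tendsto_Q_apply hx hxw a) <| by
        simp only [show ∀ k, S.Q (x k) = S.Q γ from hxs]
        exact tendsto_const_nhds
  exact ⟨ω, hω, fun γ' hγ' => hmin γ' (hγ'.trans hω)⟩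

theorem dualNormQ_le (S : CLMS 𝕜 X H) (f : StrongDual ℝ X) : S.dualNormQ f ≤ ‖f‖ / S.c := by
  refine Real.sSup_le ?_ (div_nonneg (norm_nonneg f) S.c_pos.le)
  rintro _ ⟨b, hb, rfl⟩
  have hcb : S.c * ‖b‖ ≤ 1 := by
    have hnorm : ‖inclusionInDoubleDual ℝ X b‖ = ‖b‖ := (inclusionInDoubleDualLi ℝ).norm_map b
    simpa only [hnorm] using (S.lower (inclusionInDoubleDual ℝ X b)).trans hb
  calc f b ≤ ‖f‖ * ‖b‖ := (le_abs_self _).trans (f.le_opNorm b)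
    _ ≤ ‖f‖ * (1 / S.c) := by gcongr; rwa [le_div_iff₀ S.c_pos, mul_comm]
    _ = ‖f‖ / S.c := mul_one_div _ _

end CLMS

theorem stmt_4_general {𝕜 X H : Type*} [RCLike 𝕜]
    [NormedAddCommGroup X] [NormedSpace ℝ X] [CompleteSpace X]
    [NormedAddCommGroup H] [InnerProductSpace 𝕜 H] [CompleteSpace H]
    (S : CLMS 𝕜 X H)
    (hdense : ∀ f : StrongDual ℝ X, ∃ γ : ℕ → H, ∀ a : X,
      Tendsto (fun j => S.Q (γ j) a) atTop (𝓝 (f a)))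
    (K : ℝ) (hK : 0 < K)
    (hbound : ∀ ω : H, S.MinNormSol ω → ‖ω‖ ^ 2 ≤ K * S.dualNormQ (S.Q ω)) :
    Function.Surjective S.Q := by
  intro f
  obtain ⟨γ, hγ⟩ := hdense f
  obtain ⟨M, hM⟩ : ∃ M, ∀ j, ‖S.Q (γ j)‖ ≤ M := banach_steinhaus fun a => by
    obtain ⟨C, hC⟩ := (hγ a).norm.bddAbove_range
    exact ⟨C, fun j => hC ⟨j, rfl⟩⟩
  choose ω hQω hω using fun j => S.exists_minNormSol (γ j)
  have hω_le : ∀ j, ‖ω j‖ ≤ √(K * (M / S.c)) := fun j => by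
    refine (le_abs_self _).trans (Real.abs_le_sqrt ?_)
    calc ‖ω j‖ ^ 2 ≤ K * S.dualNormQ (S.Q (ω j)) := hbound _ (hω j)
      _ ≤ K * (M / S.c) := by
        gcongr
        rw [hQω j]
        exact (S.dualNormQ_le _).trans (div_le_div_of_nonneg_right (hM j) S.c_pos.le)
  exact S.exists_Q_eq_of_tendsto hω_le fun a => by simpa only [hQω] using hγ a

/-- weak*-sequential density of the range of `Q` plus a uniform a
priori bound on minimum norm solutions imply surjectivity of `Q : H → X*`. -/
theorem stmt_4 {𝕜 X H : Type*} [RCLike 𝕜]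
    [NormedAddCommGroup X] [NormedSpace ℝ X] [CompleteSpace X]
    [TopologicalSpace.SeparableSpace (StrongDual ℝ X)]
    [NormedAddCommGroup H] [InnerProductSpace 𝕜 H] [CompleteSpace H]
    (S : CLMS 𝕜 X H)
    (hdense : ∀ f : StrongDual ℝ X, ∃ γ : ℕ → H, ∀ a : X,
      Tendsto (fun j => S.Q (γ j) a) atTop (𝓝 (f a)))
    (K : ℝ) (hK : 0 < K)
    (hbound : ∀ ω : H, S.MinNormSol ω → ‖ω‖ ^ 2 ≤ K * S.dualNormQ (S.Q ω)) :
    Function.Surjective S.Q :=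
  stmt_4_general S hdense K hK hbound
end
end

section
/- Under the stated setting, for every b ∈ X with ‖T_b‖_{H→H} = 1 there exists ω ∈ 𝒜 such that ⟨b, Qω⟩ = 1 and T_b ω = ω; in particular, every b in the unit sphere of (X, ‖·‖_{X_Q}) attains its norm on Q(𝒜). -/
open NormedSpace Filter Topology

noncomputable section

/-! Since `‖T_b‖ = 1` is the supremum of the Rayleigh quotient of `T_b`, there are unit vectors
`fₙ` with `Re ⟨T_b fₙ, fₙ⟩ → 1`, hence `‖T_b fₙ - fₙ‖² ≤ 2 (1 - Re ⟨T_b fₙ, fₙ⟩) → 0`.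
Compactness of `T_b` gives a subsequence along which `T_b fₙ`, and therefore `fₙ`, converges;
the limit `ω` is a unit fixed vector of `T_b`. Then `⟨b, Qω⟩ = ‖ω‖² = 1`, while
`⟨a, Qω⟩ ≤ ‖T_a‖` for every `a`, so `‖Qω‖_{X_Q*} = 1`. -/

open RCLike InnerProductSpace

section FixedPoint

theorem IsCompactOperator.exists_norm_eq_one_apply_eq_self {𝕜 E : Type*}
    [NontriviallyNormedField 𝕜] [NormedAddCommGroup E] [NormedSpace 𝕜 E] {T : E →L[𝕜] E}
    (hT : IsCompactOperator T) {f : ℕ → E} (hf : ∀ n, ‖f n‖ = 1)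
    (hTf : Tendsto (fun n => T (f n) - f n) atTop (𝓝 0)) :
    ∃ z, ‖z‖ = 1 ∧ T z = z := by
  obtain ⟨K, hK, hTK⟩ := hT.image_closedBall_subset_compact (f := T.toLinearMap) 1
  obtain ⟨z, -, φ, hφ, hTfz⟩ := hK.tendsto_subseq fun n => hTK ⟨f n, by simp [hf], rfl⟩
  have hfz : Tendsto (fun n => f (φ n)) atTop (𝓝 z) := by
    simpa using hTfz.sub (hTf.comp hφ.tendsto_atTop)
  have hnorm : Tendsto (fun _ : ℕ => (1 : ℝ)) atTop (𝓝 ‖z‖) := by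
    simpa only [hf] using hfz.norm
  exact ⟨z, tendsto_nhds_unique hnorm tendsto_const_nhds,
    tendsto_nhds_unique ((T.continuous.tendsto z).comp hfz) hTfz⟩

variable {𝕜 H : Type*} [RCLike 𝕜] [NormedAddCommGroup H] [InnerProductSpace 𝕜 H]
  {T : H →L[𝕜] H}

theorem ContinuousLinearMap.re_inner_apply_self_le_one (hT : ‖T‖ ≤ 1) {f : H} (hf : ‖f‖ = 1) :
    re ⟪T f, f⟫_𝕜 ≤ 1 :=
  (re_inner_le_norm _ _).trans (by simpa [hf] using T.le_of_opNorm_le hT f)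

theorem ContinuousLinearMap.norm_apply_sub_self_sq_le (hT : ‖T‖ ≤ 1) {f : H} (hf : ‖f‖ = 1) :
    ‖T f - f‖ ^ 2 ≤ 2 * (1 - re ⟪T f, f⟫_𝕜) := by
  have hTf : ‖T f‖ ≤ 1 := by simpa [hf] using T.le_of_opNorm_le hT f
  rw [norm_sub_sq (𝕜 := 𝕜), hf]
  nlinarith [norm_nonneg (T f)]

theorem ContinuousLinearMap.tendsto_apply_sub_self_of_tendsto_re_inner (hT : ‖T‖ ≤ 1)
    {f : ℕ → H} (hf : ∀ n, ‖f n‖ = 1)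
    (h : Tendsto (fun n => re ⟪T (f n), f n⟫_𝕜) atTop (𝓝 1)) :
    Tendsto (fun n => T (f n) - f n) atTop (𝓝 0) := by
  rw [tendsto_zero_iff_norm_tendsto_zero]
  have hsq : Tendsto (fun n => ‖T (f n) - f n‖ ^ 2) atTop (𝓝 0) :=
    squeeze_zero (fun n => by positivity) (fun n => T.norm_apply_sub_self_sq_le hT (hf n))
      (by simpa using (h.const_sub 1).const_mul 2)
  simpa [Real.sqrt_sq (norm_nonneg _)] using hsq.sqrt

theorem IsCompactOperator.exists_norm_eq_one_apply_eq_self_of_sSup_re_inner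
    (hT : IsCompactOperator T) (hT1 : ‖T‖ ≤ 1)
    (hsup : sSup {r : ℝ | ∃ f : H, ‖f‖ = 1 ∧ re ⟪T f, f⟫_𝕜 = r} = 1) :
    ∃ ω, ‖ω‖ = 1 ∧ T ω = ω := by
  set R := {r : ℝ | ∃ f : H, ‖f‖ = 1 ∧ re ⟪T f, f⟫_𝕜 = r}
  have hne : R.Nonempty := by
    by_contra h
    rw [Set.not_nonempty_iff_eq_empty.mp h, Real.sSup_empty] at hsup
    exact zero_ne_one hsup
  have hbdd : BddAbove R := ⟨1, by rintro _ ⟨f, hf, rfl⟩; exact T.re_inner_apply_self_le_one hT1 hf⟩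
  obtain ⟨u, -, hu, huR⟩ := exists_seq_tendsto_sSup hne hbdd
  choose f hf hfu using huR
  rw [hsup, ← funext hfu] at hu
  exact hT.exists_norm_eq_one_apply_eq_self hf (T.tendsto_apply_sub_self_of_tendsto_re_inner hT1 hf hu)

end FixedPoint

namespace CLMS

variable {𝕜 X H : Type*} [RCLike 𝕜]
    [NormedAddCommGroup X] [NormedSpace ℝ X] [CompleteSpace X]
    [NormedAddCommGroup H] [InnerProductSpace 𝕜 H] [CompleteSpace H]
    (S : CLMS 𝕜 X H)

theorem Q_apply_le (a : X) (ω : H) : S.Q ω a ≤ S.normQ a * ‖ω‖ ^ 2 := by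
  rw [S.hQ, normQ, sq, ← mul_assoc]
  exact (re_inner_le_norm _ _).trans (by gcongr; exact (S.T _).le_opNorm ω)

theorem dualNormQ_Q_eq_one {ω : H} (hω : ‖ω‖ = 1) {b : X} (hb : S.normQ b ≤ 1)
    (hQb : S.Q ω b = 1) : S.dualNormQ (S.Q ω) = 1 :=
  IsGreatest.csSup_eq ⟨⟨b, hb, hQb⟩, by
    rintro _ ⟨a, ha, rfl⟩
    simpa [hω] using (S.Q_apply_le a ω).trans (by simpa [hω] using ha)⟩

end CLMS

theorem stmt_6_general {𝕜 X H : Type*} [RCLike 𝕜]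
    [NormedAddCommGroup X] [NormedSpace ℝ X] [CompleteSpace X]
    [NormedAddCommGroup H] [InnerProductSpace 𝕜 H] [CompleteSpace H]
    (S : CLMS 𝕜 X H) (b : X) (hb : S.normQ b = 1) :
    ∃ ω ∈ S.A, S.Q ω b = 1 ∧ S.T (inclusionInDoubleDual ℝ X b) ω = ω := by
  obtain ⟨ω, hω, hfix⟩ := (S.compact b).exists_norm_eq_one_apply_eq_self_of_sSup_re_inner
    hb.le (by rw [← S.norm_eq]; exact hb)
  have hQb : S.Q ω b = 1 := by
    rw [S.hQ, hfix, inner_self_eq_norm_sq, hω]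
    norm_num
  exact ⟨ω, ⟨hω, S.dualNormQ_Q_eq_one hω hb.le hQb⟩, hQb, hfix⟩

/-- every `b` in the unit sphere of `(X, ‖·‖_{X_Q})` is a Lagrange
multiplier: there is `ω ∈ 𝒜` with `⟨b, Qω⟩ = 1` and `T_b ω = ω`. -/
theorem stmt_6 {𝕜 X H : Type*} [RCLike 𝕜]
    [NormedAddCommGroup X] [NormedSpace ℝ X] [CompleteSpace X]
    [TopologicalSpace.SeparableSpace (StrongDual ℝ X)]
    [NormedAddCommGroup H] [InnerProductSpace 𝕜 H] [CompleteSpace H]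
    (S : CLMS 𝕜 X H) (b : X) (hb : S.normQ b = 1) :
    ∃ ω ∈ S.A, S.Q ω b = 1 ∧ S.T (inclusionInDoubleDual ℝ X b) ω = ω :=
  stmt_6_general S b hb
end
end

section
/- Under the stated setting, for every b ∈ X with ‖b‖_{X_Q} = 1, the convex set D(b) has finite affine dimension: there exist a point h₀ ∈ X* and a finite-dimensional linear subspace V ⊆ X* such that D(b) ⊆ h₀ + V. -/
/-!
The fixed space `E` of the compact operator `T_b` is finite-dimensional. For `h ∈ D(b)` and
`a ∈ X`, a Danskin-type argument compares `h (b + t a) ≤ ‖T_{b + t a}‖` with approximate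
maximizers of `⟨T_{b + t a} ω, ω⟩`; as `t → 0` these accumulate, by compactness, at a unit
vector `z ∈ E` with `h a ≤ ⟨a, Q z⟩`. Hence `h` vanishes wherever the finitely many functionals
`a ↦ Re ⟨T_a x, y⟩`, `a ↦ Im ⟨T_a x, y⟩` (`x, y` spanning `E`) do, so `D(b)` lies in their span.
-/

open NormedSpace Filter Topology

noncomputable section

theorem StrongDual.mem_span_of_forall_apply_eq_zero {𝕜 E : Type*} [NontriviallyNormedField 𝕜]
    [NormedAddCommGroup E] [NormedSpace 𝕜 E] {u : Set (StrongDual 𝕜 E)} (hu : u.Finite)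
    {h : StrongDual 𝕜 E} (hker : ∀ x, (∀ f ∈ u, f x = 0) → h x = 0) :
    h ∈ Submodule.span 𝕜 u := by
  have : Finite u := hu.to_subtype
  let μ : StrongDual 𝕜 E →ₗ[𝕜] E →ₗ[𝕜] 𝕜 := ContinuousLinearMap.coeLM 𝕜
  have hμ : μ h ∈ Submodule.span 𝕜 (Set.range fun f : u => μ f) :=
    mem_span_of_iInf_ker_le_ker fun x hx =>
      hker x fun f hf => by simpa [μ] using (Submodule.mem_iInf _).1 hx ⟨f, hf⟩
  rw [Set.range_comp' μ Subtype.val, Subtype.range_coe, Submodule.span_image] at hμ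
  rwa [← Submodule.mem_comap,
    Submodule.comap_map_eq_of_injective ContinuousLinearMap.coe_injective] at hμ

theorem inner_map_eq_zero_of_mem_span {𝕜 H : Type*} [RCLike 𝕜] [NormedAddCommGroup H]
    [InnerProductSpace 𝕜 H] (T : H →L[𝕜] H) {s : Set H}
    (hs : ∀ x ∈ s, ∀ y ∈ s, inner 𝕜 (T x) y = 0) {x y : H}
    (hx : x ∈ Submodule.span 𝕜 s) (hy : y ∈ Submodule.span 𝕜 s) : inner 𝕜 (T x) y = 0 := by
  let B : H →ₗ⋆[𝕜] H →ₗ[𝕜] 𝕜 := (innerₛₗ 𝕜).comp T.toLinearMap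
  have hs_span : ∀ x ∈ s, B x y = 0 := fun x hx =>
    LinearMap.eqOn_span (f := B x) (g := 0) (fun y hy => hs x hx y hy) hy
  exact LinearMap.eqOn_span (f := B.flip y) (g := 0) hs_span hx

theorem IsCompactOperator.exists_subseq_tendsto_fixedPoint {𝕜 E : Type*}
    [NontriviallyNormedField 𝕜] [NormedAddCommGroup E] [NormedSpace 𝕜 E] {T : E →L[𝕜] E}
    (hT : IsCompactOperator T) {x : ℕ → E} (hx : ∀ n, ‖x n‖ ≤ 1)
    (hfix : Tendsto (fun n => T (x n) - x n) atTop (𝓝 0)) :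
    ∃ (z : E) (φ : ℕ → ℕ), StrictMono φ ∧ Tendsto (x ∘ φ) atTop (𝓝 z) ∧ T z = z := by
  obtain ⟨z, -, φ, hφ, hTz⟩ :=
    (hT.isCompact_closure_image_closedBall (f := T.toLinearMap) 1).tendsto_subseq fun n => subset_closure ⟨x n, mem_closedBall_zero_iff.2 (hx n), rfl⟩
  have hz : Tendsto (x ∘ φ) atTop (𝓝 z) := by
    simpa [Function.comp_def] using hTz.sub (hfix.comp hφ.tendsto_atTop)
  exact ⟨z, φ, hφ, hz, tendsto_nhds_unique ((T.continuous.tendsto z).comp hz) hTz⟩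

theorem tendsto_apply_sub_of_tendsto_re_inner {𝕜 H ι : Type*} [RCLike 𝕜] [NormedAddCommGroup H]
    [InnerProductSpace 𝕜 H] {T : H →L[𝕜] H} (hT : ‖T‖ ≤ 1) {l : Filter ι} {x : ι → H}
    (hx : ∀ i, ‖x i‖ = 1) (h : Tendsto (fun i => RCLike.re (inner 𝕜 (T (x i)) (x i))) l (𝓝 1)) :
    Tendsto (fun i => T (x i) - x i) l (𝓝 0) := by
  have hsq : Tendsto (fun i => ‖T (x i) - x i‖ ^ 2) l (𝓝 0) := by
    refine squeeze_zero (fun _ => by positivity) (fun i => ?_)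
      (by simpa using (tendsto_const_nhds (x := (2 : ℝ))).sub (h.const_mul 2))
    have hTx : ‖T (x i)‖ ≤ 1 := by simpa [hx i] using T.le_of_opNorm_le hT (x i)
    rw [@norm_sub_sq 𝕜, hx i]
    nlinarith [norm_nonneg (T (x i))]
  rw [tendsto_zero_iff_norm_tendsto_zero]
  simpa [Real.sqrt_sq (norm_nonneg _)] using hsq.sqrt

namespace CLMS

variable {𝕜 X H : Type*} [RCLike 𝕜]
    [NormedAddCommGroup X] [NormedSpace ℝ X] [CompleteSpace X]
    [NormedAddCommGroup H] [InnerProductSpace 𝕜 H] [CompleteSpace H] (S : CLMS 𝕜 X H)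

lemma normQ_nonneg (x : X) : 0 ≤ S.normQ x := norm_nonneg _

lemma normQ_smul (r : ℝ) (x : X) : S.normQ (r • x) = |r| * S.normQ x := by
  have hT : S.T (inclusionInDoubleDual ℝ X (r • x)) =
      (r : 𝕜) • S.T (inclusionInDoubleDual ℝ X x) := by
    ext ω
    rw [map_smul, S.T_smul]
    rfl
  rw [normQ, hT, norm_smul, RCLike.norm_ofReal]
  rfl

lemma eq_zero_of_normQ_eq_zero {x : X} (hx : S.normQ x = 0) : x = 0 := by
  have h := S.lower (inclusionInDoubleDual ℝ X x)
  rw [show ‖inclusionInDoubleDual ℝ X x‖ = ‖x‖ from (inclusionInDoubleDualLi ℝ).norm_map x] at h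
  have : S.c * ‖x‖ ≤ 0 := h.trans hx.le
  exact norm_le_zero_iff.1 (nonpos_of_mul_nonpos_right this S.c_pos)

lemma apply_le_dualNormQ_mul_normQ (h : StrongDual ℝ X) (x : X) :
    h x ≤ S.dualNormQ h * S.normQ x := by
  have hbdd : BddAbove {r : ℝ | ∃ y : X, S.normQ y ≤ 1 ∧ h y = r} := by
    refine ⟨‖h‖ / S.c, ?_⟩
    rintro _ ⟨y, hy, rfl⟩
    have hcy : S.c * ‖y‖ ≤ 1 := by
      simpa [show ‖inclusionInDoubleDual ℝ X y‖ = ‖y‖ from (inclusionInDoubleDualLi ℝ).norm_map y]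
        using (S.lower _).trans hy
    calc h y ≤ ‖h‖ * ‖y‖ := (le_abs_self _).trans (h.le_opNorm y)
      _ ≤ ‖h‖ / S.c := by
        rw [le_div_iff₀ S.c_pos, mul_assoc]
        exact mul_le_of_le_one_right (norm_nonneg h) (by linarith)
  rcases (S.normQ_nonneg x).eq_or_lt with hx | hx
  · rw [← hx, mul_zero, S.eq_zero_of_normQ_eq_zero hx.symm, map_zero]
  · have hunit : S.normQ ((S.normQ x)⁻¹ • x) ≤ 1 := by
      rw [S.normQ_smul, abs_of_pos (inv_pos.2 hx), inv_mul_cancel₀ hx.ne']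
    have hle : h ((S.normQ x)⁻¹ • x) ≤ S.dualNormQ h := le_csSup hbdd ⟨_, hunit, rfl⟩
    rw [map_smul, smul_eq_mul, inv_mul_le_iff₀ hx] at hle
    linarith

lemma abs_Q_apply_le {ω : H} (hω : ‖ω‖ = 1) (x : X) : |S.Q ω x| ≤ S.normQ x := by
  rw [S.hQ]
  calc |RCLike.re (inner 𝕜 (S.T (inclusionInDoubleDual ℝ X x) ω) ω)|
      ≤ ‖S.T (inclusionInDoubleDual ℝ X x) ω‖ * ‖ω‖ :=
        (RCLike.abs_re_le_norm _).trans (norm_inner_le_norm _ _)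
    _ ≤ S.normQ x := by simpa [hω, normQ] using (S.T _).le_opNorm ω

lemma continuous_Q_apply (x : X) : Continuous fun ω => S.Q ω x := by
  simp_rw [S.hQ]
  fun_prop

lemma nontrivial_of_normQ_ne_zero {b : X} (hb : S.normQ b ≠ 0) : Nontrivial H := by
  by_contra hH
  rw [not_nontrivial_iff_subsingleton] at hH
  exact hb (by simp [normQ, Subsingleton.elim (S.T _) 0])

lemma exists_lt_Q_apply [Nontrivial H] (y : X) {ε : ℝ} (hε : 0 < ε) :
    ∃ ω : H, ‖ω‖ = 1 ∧ S.normQ y - ε < S.Q ω y := by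
  obtain ⟨f, hf⟩ := exists_ne (0 : H)
  have hlt : S.normQ y - ε < sSup {r : ℝ | ∃ f : H, ‖f‖ = 1 ∧
      RCLike.re (inner 𝕜 (S.T (inclusionInDoubleDual ℝ X y) f) f) = r} := by
    rw [← S.norm_eq]
    exact sub_lt_self _ hε
  obtain ⟨_, ⟨ω, hω, rfl⟩, hωy⟩ :=
    exists_lt_of_lt_csSup (by exact ⟨_, _, norm_smul_inv_norm (𝕜 := 𝕜) hf, rfl⟩) hlt
  exact ⟨ω, hω, by rwa [S.hQ]⟩

lemma exists_almost_maximizer [Nontrivial H] {b : X} (hb : S.normQ b = 1) {h : StrongDual ℝ X}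
    (hh : h ∈ S.D b) (a : X) {t : ℝ} (ht : 0 < t) :
    ∃ ω : H, ‖ω‖ = 1 ∧ 1 - t * (|h a| + S.normQ a + t) < S.Q ω b ∧ h a - t < S.Q ω a := by
  obtain ⟨ω, hω, hgt⟩ := S.exists_lt_Q_apply (b + t • a) (pow_pos ht 2)
  have hle : h (b + t • a) ≤ S.normQ (b + t • a) := by
    simpa [hh.1] using S.apply_le_dualNormQ_mul_normQ h (b + t • a)
  rw [map_add, map_smul, hh.2, smul_eq_mul] at hle
  rw [map_add, map_smul, smul_eq_mul] at hgt
  have hQb : S.Q ω b ≤ 1 := hb ▸ (le_abs_self _).trans (S.abs_Q_apply_le hω b)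
  obtain ⟨hQa_lower, hQa_upper⟩ := abs_le.1 (S.abs_Q_apply_le hω a)
  refine ⟨ω, hω, ?_, lt_of_mul_lt_mul_left (by nlinarith) ht.le⟩
  nlinarith [neg_abs_le (h a)]

lemma exists_fixed_le_Q_apply {b : X} (hb : S.normQ b = 1) {h : StrongDual ℝ X}
    (hh : h ∈ S.D b) (a : X) :
    ∃ z : H, ‖z‖ = 1 ∧ S.T (inclusionInDoubleDual ℝ X b) z = z ∧ h a ≤ S.Q z a := by
  have := S.nontrivial_of_normQ_ne_zero (hb ▸ one_ne_zero)
  set t : ℕ → ℝ := fun n => 1 / (n + 1)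
  have ht : Tendsto t atTop (𝓝 0) := tendsto_one_div_add_atTop_nhds_zero_nat
  choose ω hω hQb hQa using fun n =>
    S.exists_almost_maximizer hb hh a (t := t n) Nat.one_div_pos_of_nat
  have hQb_lim : Tendsto (fun n => S.Q (ω n) b) atTop (𝓝 1) := by
    refine tendsto_of_tendsto_of_tendsto_of_le_of_le ?_ tendsto_const_nhds (fun n => (hQb n).le)
      fun n => hb ▸ (le_abs_self _).trans (S.abs_Q_apply_le (hω n) b)
    simpa using tendsto_const_nhds.sub (ht.mul (tendsto_const_nhds.add ht))
  have hdefect := tendsto_apply_sub_of_tendsto_re_inner hb.le hω (by simpa [S.hQ] using hQb_lim)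
  obtain ⟨z, φ, hφ, hz, hfix⟩ :=
    (S.compact b).exists_subseq_tendsto_fixedPoint (fun n => (hω n).le) hdefect
  have hlim : Tendsto (fun n => S.Q (ω (φ n)) a + t (φ n)) atTop (𝓝 (S.Q z a)) := by
    simpa using (((S.continuous_Q_apply a).tendsto z).comp hz).add (ht.comp hφ.tendsto_atTop)
  refine ⟨z, tendsto_nhds_unique hz.norm (by simp [hω]), hfix, ?_⟩
  exact le_of_tendsto_of_tendsto' tendsto_const_nhds hlim fun n => by linarith [hQa (φ n)]

lemma apply_eq_zero_of_forall_fixed {b : X} (hb : S.normQ b = 1) {h : StrongDual ℝ X}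
    (hh : h ∈ S.D b) {a : X}
    (ha : ∀ ω, S.T (inclusionInDoubleDual ℝ X b) ω = ω → S.Q ω a = 0) : h a = 0 := by
  obtain ⟨z, -, hz, hle⟩ := S.exists_fixed_le_Q_apply hb hh a
  obtain ⟨z', -, hz', hle'⟩ := S.exists_fixed_le_Q_apply hb hh (-a)
  rw [ha z hz] at hle
  rw [map_neg, map_neg, ha z' hz', neg_zero] at hle'
  linarith

lemma inner_T_eq_zero_of_Q'_eq_zero {a : X} {x y : H} (h₁ : S.Q' x y a = 0)
    (h₂ : S.Q' x ((RCLike.I : 𝕜) • y) a = 0) :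
    inner 𝕜 (S.T (inclusionInDoubleDual ℝ X a) x) y = 0 := by
  rw [S.hQ'] at h₁ h₂
  rw [inner_smul_right, RCLike.I_mul_re] at h₂
  exact RCLike.ext (by simp; linarith) (by simp; linarith)

end CLMS

theorem stmt_15_general {𝕜 X H : Type*} [RCLike 𝕜]
    [NormedAddCommGroup X] [NormedSpace ℝ X] [CompleteSpace X]
    [NormedAddCommGroup H] [InnerProductSpace 𝕜 H] [CompleteSpace H]
    (S : CLMS 𝕜 X H) (b : X) (hb : S.normQ b = 1) :
    ∃ (h₀ : StrongDual ℝ X) (V : Submodule ℝ (StrongDual ℝ X)), FiniteDimensional ℝ V ∧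
      ∀ h ∈ S.D b, h - h₀ ∈ V := by
  have := ContinuousLinearMap.finite_dimensional_eigenspace (S.compact b) 1 one_ne_zero
  obtain ⟨s, hs⟩ := (Submodule.fg_iff_finiteDimensional _).2 this
  -- `Q' x (I • y) a = -2 Im ⟨T_a x, y⟩`, so `u` records real and imaginary parts of `⟨T_a x, y⟩`
  set u : Set (StrongDual ℝ X) :=
    Set.image2 S.Q' s s ∪ Set.image2 (fun x y => S.Q' x ((RCLike.I : 𝕜) • y)) s s
  have hu : u.Finite := (s.finite_toSet.image2 _ s.finite_toSet).union
    (s.finite_toSet.image2 _ s.finite_toSet)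
  refine ⟨0, Submodule.span ℝ u, FiniteDimensional.span_of_finite ℝ hu, fun h hh => ?_⟩
  rw [sub_zero]
  refine StrongDual.mem_span_of_forall_apply_eq_zero hu fun a ha =>
    S.apply_eq_zero_of_forall_fixed hb hh fun ω hω => ?_
  have hωs : ω ∈ Submodule.span 𝕜 (s : Set H) := by
    rw [hs, Module.End.mem_eigenspace_iff, one_smul]
    exact hω
  have hs_zero : ∀ x ∈ (s : Set H), ∀ y ∈ (s : Set H),
      inner 𝕜 (S.T (inclusionInDoubleDual ℝ X a) x) y = 0 := fun x hx y hy =>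
    S.inner_T_eq_zero_of_Q'_eq_zero (ha _ (Or.inl ⟨x, hx, y, hy, rfl⟩))
      (ha _ (Or.inr ⟨x, hx, y, hy, rfl⟩))
  rw [S.hQ, inner_map_eq_zero_of_mem_span _ hs_zero hωs hωs, map_zero]

/-- for `b` in the unit sphere of `(X, ‖·‖_{X_Q})`, the convex set
`D(b)` has finite affine dimension. -/
theorem stmt_15 {𝕜 X H : Type*} [RCLike 𝕜]
    [NormedAddCommGroup X] [NormedSpace ℝ X] [CompleteSpace X]
    [TopologicalSpace.SeparableSpace (StrongDual ℝ X)]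
    [NormedAddCommGroup H] [InnerProductSpace 𝕜 H] [CompleteSpace H]
    (S : CLMS 𝕜 X H) (b : X) (hb : S.normQ b = 1) :
    ∃ (h₀ : StrongDual ℝ X) (V : Submodule ℝ (StrongDual ℝ X)), FiniteDimensional ℝ V ∧
      ∀ h ∈ S.D b, h - h₀ ∈ V :=
  stmt_15_general S b hb
end
end
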